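/- arXiv:1612.08295 — 5 statements merged into one kernel-verified Lean document; each statement's English description precedes it below -/
import Mathlib

section
/- ᾱ is monotone at infinity: if E, F ⊆ ℝⁿ satisfy E \ B_r(q) ⊆ F \ B_r(q) for some r > 0 and q ∈ ℝⁿ, then ᾱ(E) ≤ ᾱ(F). -/
/-!
On the complement of `B₁` the kernel `|y|^{-(n+s)}` is at most `1`, and `χ_E ≤ χ_F + χ_{B_r(q)}`,
so the tail integral of `E` exceeds that of `F` by at most `|B_r(q)|`, an error which the factor `s`
kills as `s → 0⁺`. Polar coordinates give `s ∫_{ℝⁿ \ B₁} |y|^{-(n+s)} dy = n |B₁|`; this keeps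
`s · tailIntegral` bounded, so that both limsups are genuine limsups in `ℝ`.
-/

open MeasureTheory Filter Metric Topology

/-- The weighted tail integral `∫_{ℝⁿ \ B_r(q)} χ_E(y) / |q - y|^{n+s} dy`. -/
noncomputable def tailIntegral (n : ℕ) (E : Set (EuclideanSpace ℝ (Fin n))) (s : ℝ)
    (q : EuclideanSpace ℝ (Fin n)) (r : ℝ) : ℝ :=
  ∫ y in (ball q r)ᶜ, E.indicator (fun _ => (1 : ℝ)) y / ‖q - y‖ ^ ((n : ℝ) + s)

/-- `ᾱ(E) = limsup_{s→0⁺} s · ∫_{ℝⁿ \ B₁} χ_E(y)/|y|^{n+s} dy`. -/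
noncomputable def alphaBar (n : ℕ) (E : Set (EuclideanSpace ℝ (Fin n))) : ℝ :=
  limsup (fun s : ℝ => s * tailIntegral n E s 0 1) (𝓝[>] (0 : ℝ))

open Set

lemma indicator_compl_ball_zero_one_comp_norm {E M : Type*} [SeminormedAddCommGroup E]
    [Zero M] (g : ℝ → M) :
    (ball (0 : E) 1)ᶜ.indicator (fun x ↦ g ‖x‖) = fun x ↦ (Ici 1).indicator g ‖x‖ := by
  have hpre : (ball (0 : E) 1)ᶜ = (‖·‖) ⁻¹' Ici 1 := by ext x; simp
  rw [hpre]
  exact funext fun x ↦ indicator_comp_right (‖·‖)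

lemma compl_ball_eq_empty_of_subsingleton {E : Type*} [SeminormedAddCommGroup E]
    [Subsingleton E] : (ball (0 : E) 1)ᶜ = ∅ := by
  ext x; simp [Subsingleton.elim x 0]

lemma pow_smul_indicator_Ici_one_rpow_neg {p t : ℝ} {d : ℕ} (hd : 1 ≤ d) (ht : 0 < t) :
    t ^ (d - 1) • (Ici 1).indicator (· ^ (-p)) t =
      (Ici 1).indicator (· ^ ((d : ℝ) - 1 - p)) t := by
  by_cases ht1 : t ∈ Ici 1
  · rw [indicator_of_mem ht1, indicator_of_mem ht1, smul_eq_mul, ← Real.rpow_natCast,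
      ← Real.rpow_add ht]
    congr 1
    push_cast [Nat.cast_sub hd]
    ring
  · simp [ht1]

lemma integral_Ioi_zero_pow_smul_indicator_Ici_one {p : ℝ} {d : ℕ} (hd : 1 ≤ d) (hp : d < p) :
    ∫ t in Ioi (0 : ℝ), t ^ (d - 1) • (Ici 1).indicator (· ^ (-p)) t = 1 / (p - d) := by
  rw [setIntegral_congr_fun measurableSet_Ioi
      fun t ht ↦ pow_smul_indicator_Ici_one_rpow_neg hd ht,
    setIntegral_indicator measurableSet_Ici,
    inter_eq_self_of_subset_right (Ici_subset_Ioi.2 one_pos), integral_Ici_eq_integral_Ioi,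
    integral_Ioi_rpow_of_lt (by linarith) one_pos, Real.one_rpow,
    show (d : ℝ) - 1 - p + 1 = -(p - d) by ring, neg_div_neg_eq]

section RadialTail

variable {E : Type*} [NormedAddCommGroup E] [NormedSpace ℝ E] [FiniteDimensional ℝ E]
  [MeasurableSpace E] [BorelSpace E] (μ : Measure E) [μ.IsAddHaarMeasure] {p : ℝ}

lemma integrableOn_norm_rpow_neg_compl_ball (hp : Module.finrank ℝ E < p) :
    IntegrableOn (fun x : E ↦ ‖x‖ ^ (-p)) (ball 0 1)ᶜ μ := by
  rcases subsingleton_or_nontrivial E with hE | hE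
  · simp [compl_ball_eq_empty_of_subsingleton]
  have hd : 1 ≤ Module.finrank ℝ E := Module.finrank_pos
  rw [← integrable_indicator_iff measurableSet_ball.compl,
    indicator_compl_ball_zero_one_comp_norm (fun t ↦ t ^ (-p)), integrable_fun_norm_addHaar]
  refine IntegrableOn.congr_fun ?_
    (fun t ht ↦ (pow_smul_indicator_Ici_one_rpow_neg hd ht).symm) measurableSet_Ioi
  have hIci : IntegrableOn (· ^ ((Module.finrank ℝ E : ℝ) - 1 - p)) (Ici (1 : ℝ)) :=
    (integrableOn_Ici_iff_integrableOn_Ioi).2 (integrableOn_Ioi_rpow_of_lt (by linarith) one_pos)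
  exact (hIci.integrable_indicator measurableSet_Ici).integrableOn

lemma integral_norm_rpow_neg_compl_ball (hp : Module.finrank ℝ E < p) :
    ∫ x in (ball 0 1)ᶜ, ‖x‖ ^ (-p) ∂μ =
      Module.finrank ℝ E * μ.real (ball 0 1) / (p - Module.finrank ℝ E) := by
  rcases subsingleton_or_nontrivial E with hE | hE
  · simp [compl_ball_eq_empty_of_subsingleton, Module.finrank_zero_of_subsingleton]
  have hd : 1 ≤ Module.finrank ℝ E := Module.finrank_pos
  rw [← integral_indicator measurableSet_ball.compl,
    indicator_compl_ball_zero_one_comp_norm (fun t ↦ t ^ (-p)), integral_fun_norm_addHaar,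
    integral_Ioi_zero_pow_smul_indicator_Ici_one hd hp, nsmul_eq_mul, smul_eq_mul, mul_one_div,
    mul_div_assoc]

end RadialTail

lemma div_rpow_le_rpow_neg {x a : ℝ} (hx : x ≤ 1) (ha : 0 ≤ a) (p : ℝ) :
    x / a ^ p ≤ a ^ (-p) := by
  rw [Real.rpow_neg ha, div_eq_mul_inv]
  exact mul_le_of_le_one_left (inv_nonneg.2 (Real.rpow_nonneg ha p)) hx

lemma indicator_one_le_add_indicator_one {α : Type*} {s t u : Set α} (h : s ⊆ t ∪ u) (y : α) :
    s.indicator (fun _ ↦ (1 : ℝ)) y ≤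
      t.indicator (fun _ ↦ (1 : ℝ)) y + u.indicator (fun _ ↦ (1 : ℝ)) y := by
  by_cases hs : y ∈ s
  · rcases h hs with ht | hu
    · simp [hs, ht, indicator_nonneg]
    · simp [hs, hu, indicator_nonneg]
  · simp [hs, indicator_nonneg, add_nonneg]

lemma limsup_le_limsup_of_le_add_of_tendsto_zero {ι : Type*} {l : Filter ι} [l.NeBot]
    {f g h : ι → ℝ} (hfg : f ≤ᶠ[l] g + h) (hh : Tendsto h l (𝓝 0))
    (hf : IsBoundedUnder (· ≥ ·) l f) (hg_ge : IsBoundedUnder (· ≥ ·) l g)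
    (hg_le : IsBoundedUnder (· ≤ ·) l g) :
    limsup f l ≤ limsup g l :=
  calc limsup f l ≤ limsup (g + h) l :=
        limsup_le_limsup hfg hf.isCoboundedUnder_le
          (isBoundedUnder_le_add hg_le hh.isBoundedUnder_le)
    _ ≤ limsup g l + limsup h l :=
        limsup_add_le hg_ge hg_le hh.isCoboundedUnder_le hh.isBoundedUnder_le
    _ = limsup g l := by rw [hh.limsup_eq, add_zero]

section TailIntegral

variable {n : ℕ}

lemma tailIntegral_nonneg (A : Set (EuclideanSpace ℝ (Fin n))) (s : ℝ)
    (q : EuclideanSpace ℝ (Fin n)) (r : ℝ) : 0 ≤ tailIntegral n A s q r :=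
  integral_nonneg fun _ ↦ div_nonneg (indicator_nonneg (fun _ _ ↦ zero_le_one) _)
    (Real.rpow_nonneg (norm_nonneg _) _)

lemma indicator_div_norm_rpow_le (A : Set (EuclideanSpace ℝ (Fin n))) (p : ℝ)
    (y : EuclideanSpace ℝ (Fin n)) :
    A.indicator (fun _ ↦ (1 : ℝ)) y / ‖0 - y‖ ^ p ≤ ‖y‖ ^ (-p) := by
  rw [zero_sub, norm_neg]
  exact div_rpow_le_rpow_neg
    (indicator_apply_le' (s := A) (fun _ ↦ le_rfl) fun _ ↦ zero_le_one) (norm_nonneg y) p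

lemma integrableOn_indicator_div_norm_rpow {A : Set (EuclideanSpace ℝ (Fin n))}
    (hA : MeasurableSet A) {s : ℝ} (hs : 0 < s) :
    IntegrableOn (fun y ↦ A.indicator (fun _ ↦ (1 : ℝ)) y / ‖0 - y‖ ^ ((n : ℝ) + s))
      (ball 0 1)ᶜ := by
  refine (integrableOn_norm_rpow_neg_compl_ball volume (p := n + s)
    (by simpa using hs)).mono' ?_ (ae_of_all _ fun y ↦ ?_)
  · exact ((measurable_const.indicator hA).div (by fun_prop)).aestronglyMeasurable
  · rw [Real.norm_of_nonneg (div_nonneg (indicator_nonneg (fun _ _ ↦ zero_le_one) y)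
      (Real.rpow_nonneg (norm_nonneg _) _))]
    exact indicator_div_norm_rpow_le A _ y

lemma tailIntegral_le (A : Set (EuclideanSpace ℝ (Fin n))) {s : ℝ} (hs : 0 < s) :
    tailIntegral n A s 0 1 ≤ n * volume.real (ball (0 : EuclideanSpace ℝ (Fin n)) 1) / s := by
  have hp : (Module.finrank ℝ (EuclideanSpace ℝ (Fin n)) : ℝ) < n + s := by simpa using hs
  calc tailIntegral n A s 0 1 ≤ ∫ y in (ball 0 1)ᶜ, ‖y‖ ^ (-((n : ℝ) + s)) :=
        integral_mono_of_nonneg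
          (ae_of_all _ fun _ ↦ div_nonneg (indicator_nonneg (fun _ _ ↦ zero_le_one) _)
            (Real.rpow_nonneg (norm_nonneg _) _))
          (integrableOn_norm_rpow_neg_compl_ball volume hp)
          (ae_of_all _ (indicator_div_norm_rpow_le A _))
    _ = n * volume.real (ball (0 : EuclideanSpace ℝ (Fin n)) 1) / s := by
        rw [integral_norm_rpow_neg_compl_ball volume hp, finrank_euclideanSpace_fin,
          add_sub_cancel_left]

lemma tailIntegral_le_add_volume_ball {E F : Set (EuclideanSpace ℝ (Fin n))}
    (hF : MeasurableSet F) {q : EuclideanSpace ℝ (Fin n)} {r : ℝ}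
    (h : E \ ball q r ⊆ F \ ball q r) {s : ℝ} (hs : 0 < s) :
    tailIntegral n E s 0 1 ≤ tailIntegral n F s 0 1 + volume.real (ball q r) := by
  have hEF : E ⊆ F ∪ ball q r := fun y hy ↦ by
    by_cases hyq : y ∈ ball q r
    · exact Or.inr hyq
    · exact Or.inl (h ⟨hy, hyq⟩).1
  have hball : Integrable ((ball q r).indicator (fun _ ↦ (1 : ℝ))) :=
    (integrable_indicator_iff measurableSet_ball).2 (integrableOn_const measure_ball_lt_top.ne)
  have hFi := integrableOn_indicator_div_norm_rpow hF hs
  set d : EuclideanSpace ℝ (Fin n) → ℝ := fun y ↦ ‖0 - y‖ ^ ((n : ℝ) + s)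
  have hpointwise : ∀ y ∈ (ball (0 : EuclideanSpace ℝ (Fin n)) 1)ᶜ,
      E.indicator (fun _ ↦ (1 : ℝ)) y / d y ≤
        F.indicator (fun _ ↦ (1 : ℝ)) y / d y + (ball q r).indicator (fun _ ↦ (1 : ℝ)) y := by
    intro y hy
    have hd : 1 ≤ d y := Real.one_le_rpow (by simpa using hy) (by positivity)
    calc E.indicator (fun _ ↦ (1 : ℝ)) y / d y
        ≤ (F.indicator (fun _ ↦ (1 : ℝ)) y + (ball q r).indicator (fun _ ↦ (1 : ℝ)) y) / d y := by
          gcongr; exact indicator_one_le_add_indicator_one hEF y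
      _ ≤ _ := by
          rw [add_div]
          gcongr
          exact div_le_self (indicator_nonneg (fun _ _ ↦ zero_le_one) y) hd
  calc tailIntegral n E s 0 1
      ≤ ∫ y in (ball 0 1)ᶜ, (F.indicator (fun _ ↦ (1 : ℝ)) y / d y +
          (ball q r).indicator (fun _ ↦ (1 : ℝ)) y) :=
        integral_mono_of_nonneg
          (ae_of_all _ fun _ ↦ div_nonneg (indicator_nonneg (fun _ _ ↦ zero_le_one) _)
            (Real.rpow_nonneg (norm_nonneg _) _))
          (hFi.add hball.integrableOn)
          ((ae_restrict_iff' measurableSet_ball.compl).2 (ae_of_all _ hpointwise))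
    _ = tailIntegral n F s 0 1 +
          ∫ y in (ball 0 1)ᶜ, (ball q r).indicator (fun _ ↦ (1 : ℝ)) y :=
        integral_add hFi hball.integrableOn
    _ ≤ tailIntegral n F s 0 1 + volume.real (ball q r) := by
        gcongr
        calc _ ≤ ∫ y, (ball q r).indicator (fun _ ↦ (1 : ℝ)) y :=
              setIntegral_le_integral hball
                (ae_of_all _ (indicator_nonneg fun _ _ ↦ zero_le_one))
          _ = volume.real (ball q r) := integral_indicator_one measurableSet_ball

end TailIntegral

theorem alphaBar_mono_general (n : ℕ) (E F : Set (EuclideanSpace ℝ (Fin n)))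
    (hF : MeasurableSet F)
    (r : ℝ) (q : EuclideanSpace ℝ (Fin n))
    (h : E \ ball q r ⊆ F \ ball q r) :
    alphaBar n E ≤ alphaBar n F := by
  have hpos : ∀ᶠ s in 𝓝[>] (0 : ℝ), 0 < s := self_mem_nhdsWithin
  have hbdd_below (A : Set (EuclideanSpace ℝ (Fin n))) :
      IsBoundedUnder (· ≥ ·) (𝓝[>] 0) fun s ↦ s * tailIntegral n A s 0 1 :=
    isBoundedUnder_of_eventually_ge <| hpos.mono fun s hs ↦
      mul_nonneg hs.le (tailIntegral_nonneg A s 0 1)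
  set C := n * volume.real (ball (0 : EuclideanSpace ℝ (Fin n)) 1)
  have hbdd_above : IsBoundedUnder (· ≤ ·) (𝓝[>] 0) fun s ↦ s * tailIntegral n F s 0 1 :=
    isBoundedUnder_of_eventually_le (a := C) <| hpos.mono fun s hs ↦
      calc s * tailIntegral n F s 0 1 ≤ s * (C / s) :=
            mul_le_mul_of_nonneg_left (tailIntegral_le F hs) hs.le
        _ = C := mul_div_cancel₀ _ hs.ne'
  refine limsup_le_limsup_of_le_add_of_tendsto_zero (h := fun s ↦ s * volume.real (ball q r))
    ?_ ?_ (hbdd_below E) (hbdd_below F) hbdd_above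
  · filter_upwards [hpos] with s hs
    rw [Pi.add_apply, ← mul_add]
    exact mul_le_mul_of_nonneg_left (tailIntegral_le_add_volume_ball hF h hs) hs.le
  · exact ((continuous_mul_const _).tendsto' 0 0 (zero_mul _)).mono_left nhdsWithin_le_nhds

/-- Monotonicity of `ᾱ` at infinity: if `E \ B_r(q) ⊆ F \ B_r(q)` for some `r > 0` and
`q ∈ ℝⁿ`, then `ᾱ(E) ≤ ᾱ(F)`. -/
theorem alphaBar_mono (n : ℕ) (E F : Set (EuclideanSpace ℝ (Fin n)))
    (hE : MeasurableSet E) (hF : MeasurableSet F)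
    (r : ℝ) (hr : 0 < r) (q : EuclideanSpace ℝ (Fin n))
    (h : E \ ball q r ⊆ F \ ball q r) :
    alphaBar n E ≤ alphaBar n F :=
  alphaBar_mono_general n E F hF r q h
end

section
/- ᾱ is invariant under translations: for every E ⊆ ℝⁿ and x ∈ ℝⁿ, ᾱ(E + x) = ᾱ(E). Moreover, for every rotation R ∈ SO(n), ᾱ(R E) = ᾱ(E). -/
/-!
Translating `E` by `x` moves the centre of the tail integral from `0` to `-x`, and a rotation
changes nothing, since both maps are measure-preserving isometries. For `s ∈ (0, 1]` the tail
integrals centred at `q` and at `0` differ by a bounded amount, because far out the two kernels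
agree up to `O(|y|^{-(n+1)})`. Multiplied by `s` the difference tends to `0`, so the limsups
agree.
-/

open MeasureTheory Filter Metric Topology

lemma Real.sInf_le_sInf_of_forall_add_mem {A B : Set ℝ} (hA : BddBelow A) (hB : B.Nonempty)
    (hBA : ∀ ε > 0, ∀ b ∈ B, b + ε ∈ A) : sInf A ≤ sInf B := by
  refine le_of_forall_pos_le_add fun ε hε => ?_
  have : sInf A - ε ≤ sInf B :=
    le_csInf hB fun b hb => by linarith [csInf_le hA (hBA ε hε b hb)]
  linarith

/-- This includes the case where both sets are empty or unbounded below, so that `sInf` takes the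
junk value `0` on both. -/
lemma Real.sInf_eq_sInf_of_forall_add_mem {A B : Set ℝ}
    (hAB : ∀ ε > 0, ∀ a ∈ A, a + ε ∈ B) (hBA : ∀ ε > 0, ∀ b ∈ B, b + ε ∈ A) :
    sInf A = sInf B := by
  rcases A.eq_empty_or_nonempty with rfl | hA
  · rw [Set.eq_empty_of_forall_notMem fun b hb => hBA 1 one_pos b hb]
  obtain ⟨a, ha⟩ := hA
  have hB : B.Nonempty := ⟨a + 1, hAB 1 one_pos a ha⟩
  have bdd_of : ∀ {X Y : Set ℝ}, (∀ ε > 0, ∀ y ∈ Y, y + ε ∈ X) → BddBelow X → BddBelow Y :=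
    fun hYX ⟨m, hm⟩ => ⟨m - 1, fun y hy => by linarith [hm (hYX 1 one_pos y hy)]⟩
  by_cases hbdd : BddBelow A
  · exact le_antisymm (Real.sInf_le_sInf_of_forall_add_mem hbdd hB hBA)
      (Real.sInf_le_sInf_of_forall_add_mem (bdd_of hBA hbdd) ⟨a, ha⟩ hAB)
  · rw [Real.sInf_of_not_bddBelow hbdd,
      Real.sInf_of_not_bddBelow fun h => hbdd (bdd_of hAB h)]

theorem Filter.limsup_eq_limsup_of_tendsto_sub {α : Type*} {l : Filter α} {f g : α → ℝ}
    (h : Tendsto (fun x => g x - f x) l (𝓝 0)) : limsup g l = limsup f l := by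
  rw [limsup_eq, limsup_eq]
  refine Real.sInf_eq_sInf_of_forall_add_mem (fun ε hε a ha => ?_) (fun ε hε a ha => ?_)
  · filter_upwards [ha, h.eventually (eventually_ge_nhds (neg_lt_zero.2 hε))] with x _ _
    linarith
  · filter_upwards [ha, h.eventually (eventually_le_nhds hε)] with x _ _
    linarith

theorem tailIntegral_image_isometryEquiv {n : ℕ} (E : Set (EuclideanSpace ℝ (Fin n)))
    (f : EuclideanSpace ℝ (Fin n) ≃ᵢ EuclideanSpace ℝ (Fin n)) (hf : MeasurePreserving f)
    (s : ℝ) (q : EuclideanSpace ℝ (Fin n)) (r : ℝ) :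
    tailIntegral n (f '' E) s (f q) r = tailIntegral n E s q r := by
  rw [tailIntegral, ← hf.setIntegral_preimage_emb f.toHomeomorph.measurableEmbedding,
    Set.preimage_compl, f.preimage_ball, f.symm_apply_apply, tailIntegral]
  congr! 2 with y
  rw [Set.indicator_image f.injective, ← dist_eq_norm, f.dist_eq, dist_eq_norm]
  rfl

lemma Real.abs_rpow_neg_sub_rpow_neg_le {p m a b : ℝ} (hp : 0 < p) (hm : 0 < m) (ha : m ≤ a)
    (hb : m ≤ b) : |a ^ (-p) - b ^ (-p)| ≤ p * m ^ (-(p + 1)) * |a - b| := by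
  have hderiv_le : ∀ t ∈ Set.Ici m, ‖-p * t ^ (-p - 1)‖ ≤ p * m ^ (-(p + 1)) := fun t ht => by
    have ht0 : 0 < t := hm.trans_le ht
    rw [norm_mul, norm_neg, Real.norm_of_nonneg hp.le,
      Real.norm_of_nonneg (Real.rpow_nonneg ht0.le _), show -p - 1 = -(p + 1) by ring]
    exact mul_le_mul_of_nonneg_left (Real.rpow_le_rpow_of_nonpos hm ht (by linarith)) hp.le
  simpa only [Real.norm_eq_abs] using Convex.norm_image_sub_le_of_norm_hasDerivWithin_le
    (fun t ht => (Real.hasDerivAt_rpow_const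
      (Or.inl (hm.trans_le ht).ne')).hasDerivWithinAt) hderiv_le (convex_Ici m) hb ha

lemma Real.rpow_neg_le_mul_rpow_neg {u v c e : ℝ} (hu : 0 < u) (hv : 0 < v) (hc : 0 < c)
    (he : 0 ≤ e) (h : v ≤ c * u) : u ^ (-e) ≤ c ^ e * v ^ (-e) :=
  calc u ^ (-e) = c ^ e * (c * u) ^ (-e) := by
        rw [Real.mul_rpow hc.le hu.le, ← mul_assoc, ← Real.rpow_add hc, add_neg_cancel,
          Real.rpow_zero, one_mul]
    _ ≤ c ^ e * v ^ (-e) :=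
        mul_le_mul_of_nonneg_left (Real.rpow_le_rpow_of_nonpos hv h (neg_nonpos.2 he))
          (Real.rpow_nonneg hc.le e)

lemma one_le_norm_sub_of_mem_compl_ball {G : Type*} [SeminormedAddCommGroup G] {q y : G}
    (hy : y ∈ (ball q 1)ᶜ) : 1 ≤ ‖q - y‖ := by
  simpa [dist_eq_norm, norm_sub_rev] using hy

lemma Set.abs_indicator_one_le {α : Type*} (s : Set α) (y : α) :
    |s.indicator (fun _ => (1 : ℝ)) y| ≤ 1 := by
  by_cases hy : y ∈ s <;> simp [hy]

section TailIntegrand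

variable {n : ℕ} {E : Set (EuclideanSpace ℝ (Fin n))}

noncomputable def tailIntegrand (E : Set (EuclideanSpace ℝ (Fin n))) (p : ℝ)
    (q : EuclideanSpace ℝ (Fin n)) : EuclideanSpace ℝ (Fin n) → ℝ :=
  (ball q 1)ᶜ.indicator fun y => E.indicator (fun _ => (1 : ℝ)) y / ‖q - y‖ ^ p

lemma tailIntegral_eq_integral_tailIntegrand (s : ℝ) (q : EuclideanSpace ℝ (Fin n)) :
    tailIntegral n E s q 1 = ∫ y, tailIntegrand E (n + s) q y :=
  (integral_indicator measurableSet_ball.compl).symm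

lemma tailIntegrand_nonneg (p : ℝ) (q y : EuclideanSpace ℝ (Fin n)) :
    0 ≤ tailIntegrand E p q y :=
  Set.indicator_apply_nonneg fun _ =>
    div_nonneg (Set.indicator_apply_nonneg fun _ => zero_le_one) (Real.rpow_nonneg (norm_nonneg _) _)

lemma tailIntegrand_le_rpow_neg {p : ℝ} {q y : EuclideanSpace ℝ (Fin n)} (hy : y ∈ (ball q 1)ᶜ) :
    tailIntegrand E p q y ≤ ‖q - y‖ ^ (-p) := by
  have h1 := one_le_norm_sub_of_mem_compl_ball hy
  rw [tailIntegrand, Set.indicator_of_mem hy, Real.rpow_neg (by linarith), ← one_div]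
  gcongr
  exact (le_abs_self _).trans (E.abs_indicator_one_le y)

lemma tailIntegrand_le_one {p : ℝ} (hp : 0 ≤ p) (q y : EuclideanSpace ℝ (Fin n)) :
    tailIntegrand E p q y ≤ 1 := by
  by_cases hy : y ∈ (ball q 1)ᶜ
  · exact (tailIntegrand_le_rpow_neg hy).trans
      (Real.rpow_le_one_of_one_le_of_nonpos (one_le_norm_sub_of_mem_compl_ball hy) (by linarith))
  · rw [tailIntegrand, Set.indicator_of_notMem hy]
    exact zero_le_one

lemma tailIntegrand_le {p : ℝ} (hp : 0 ≤ p) (q y : EuclideanSpace ℝ (Fin n)) :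
    tailIntegrand E p q y ≤ 2 ^ p * (1 + ‖y - q‖) ^ (-p) := by
  by_cases hy : y ∈ (ball q 1)ᶜ
  · have h1 := one_le_norm_sub_of_mem_compl_ball hy
    rw [norm_sub_rev]
    exact (tailIntegrand_le_rpow_neg hy).trans
      (Real.rpow_neg_le_mul_rpow_neg (by linarith) (by positivity) two_pos hp (by linarith))
  · rw [tailIntegrand, Set.indicator_of_notMem hy]
    positivity

lemma measurable_tailIntegrand (hE : MeasurableSet E) {p : ℝ} (hp : 0 ≤ p)
    (q : EuclideanSpace ℝ (Fin n)) : Measurable (tailIntegrand E p q) :=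
  ((measurable_const.indicator hE).div ((continuous_const.sub continuous_id).norm.rpow_const
    fun _ => Or.inr hp).measurable).indicator measurableSet_ball.compl

lemma integrable_tailIntegrand (hE : MeasurableSet E) {p : ℝ} (hp : (n : ℝ) < p)
    (q : EuclideanSpace ℝ (Fin n)) : Integrable (tailIntegrand E p q) := by
  have hp0 : 0 ≤ p := (Nat.cast_nonneg n).trans hp.le
  have hbound : Integrable fun y : EuclideanSpace ℝ (Fin n) => (1 + ‖y - q‖) ^ (-p) :=
    (integrable_one_add_norm (by rwa [finrank_euclideanSpace_fin])).comp_sub_right q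
  refine (hbound.const_mul (2 ^ p)).mono' (measurable_tailIntegrand hE hp0 q).aestronglyMeasurable
    (ae_of_all _ fun y => ?_)
  rw [Real.norm_of_nonneg (tailIntegrand_nonneg p q y)]
  exact tailIntegrand_le hp0 q y

/-- Far from both centres the two kernels differ by `O(|q| |y|^{-(n+1)})`, by the mean value
theorem; the exponent `n + 1` makes this integrable uniformly in `p ∈ (n, n + 1]`. -/
lemma abs_tailIntegrand_sub_le_of_far {p : ℝ} (hp : (n : ℝ) < p) (hp' : p ≤ n + 1)
    {q y : EuclideanSpace ℝ (Fin n)} (hy : 2 * ‖q‖ + 2 ≤ ‖y‖) :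
    |tailIntegrand E p q y - tailIntegrand E p 0 y|
      ≤ (n + 1) * 4 ^ ((n : ℝ) + 1) * ‖q‖ * (1 + ‖y‖) ^ (-((n : ℝ) + 1)) := by
  have hp0 : 0 < p := (Nat.cast_nonneg n).trans_lt hp
  have hq := norm_nonneg q
  have hqy : ‖y‖ - ‖q‖ ≤ ‖q - y‖ := by
    rw [norm_sub_rev]
    exact norm_sub_norm_le y q
  have hy0 : y ∈ (ball 0 1)ᶜ := by
    simp only [Set.mem_compl_iff, mem_ball, dist_zero_right, not_lt]
    linarith
  have hyq : y ∈ (ball q 1)ᶜ := by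
    simp only [Set.mem_compl_iff, mem_ball, dist_eq_norm, norm_sub_rev y q, not_lt]
    linarith
  have hdist : |‖q - y‖ - ‖y‖| ≤ ‖q‖ := by
    simpa using abs_norm_sub_norm_le (q - y) (-y)
  have hm : 1 ≤ ‖y‖ / 2 := by linarith
  rw [tailIntegrand, tailIntegrand, Set.indicator_of_mem hyq, Set.indicator_of_mem hy0, zero_sub,
    norm_neg, div_eq_mul_inv, div_eq_mul_inv, ← mul_sub, abs_mul,
    ← Real.rpow_neg (norm_nonneg _), ← Real.rpow_neg (norm_nonneg _)]
  calc _ ≤ 1 * |‖q - y‖ ^ (-p) - ‖y‖ ^ (-p)| :=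
        mul_le_mul_of_nonneg_right (E.abs_indicator_one_le y) (abs_nonneg _)
    _ ≤ p * (‖y‖ / 2) ^ (-(p + 1)) * |‖q - y‖ - ‖y‖| := by
        rw [one_mul]
        exact Real.abs_rpow_neg_sub_rpow_neg_le hp0 (by linarith) (by linarith) (by linarith)
    _ ≤ (n + 1) * (4 ^ ((n : ℝ) + 1) * (1 + ‖y‖) ^ (-((n : ℝ) + 1))) * ‖q‖ := by
        gcongr
        calc (‖y‖ / 2) ^ (-(p + 1)) ≤ (‖y‖ / 2) ^ (-((n : ℝ) + 1)) :=
              Real.rpow_le_rpow_of_exponent_le hm (by linarith)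
          _ ≤ 4 ^ ((n : ℝ) + 1) * (1 + ‖y‖) ^ (-((n : ℝ) + 1)) :=
              Real.rpow_neg_le_mul_rpow_neg (by linarith) (by positivity) (by norm_num)
                (by positivity) (by linarith)
    _ = _ := by ring

lemma abs_tailIntegrand_sub_le {p : ℝ} (hp : (n : ℝ) < p) (hp' : p ≤ n + 1)
    (q y : EuclideanSpace ℝ (Fin n)) :
    |tailIntegrand E p q y - tailIntegrand E p 0 y|
      ≤ (ball 0 (2 * ‖q‖ + 2)).indicator (fun _ => 2) y
        + (n + 1) * 4 ^ ((n : ℝ) + 1) * ‖q‖ * (1 + ‖y‖) ^ (-((n : ℝ) + 1)) := by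
  have hp0 : 0 ≤ p := (Nat.cast_nonneg n).trans hp.le
  have hfar_nonneg : 0 ≤ (n + 1) * 4 ^ ((n : ℝ) + 1) * ‖q‖ * (1 + ‖y‖) ^ (-((n : ℝ) + 1)) := by
    positivity
  by_cases hy : y ∈ ball 0 (2 * ‖q‖ + 2)
  · rw [Set.indicator_of_mem hy]
    have := tailIntegrand_nonneg (E := E) p q y
    have := tailIntegrand_nonneg (E := E) p 0 y
    have := tailIntegrand_le_one (E := E) hp0 q y
    have := tailIntegrand_le_one (E := E) hp0 0 y
    rw [abs_le]
    constructor <;> linarith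
  · rw [Set.indicator_of_notMem hy, zero_add]
    exact abs_tailIntegrand_sub_le_of_far hp hp' (by simpa using hy)

lemma exists_abs_tailIntegral_sub_le (hE : MeasurableSet E) (q : EuclideanSpace ℝ (Fin n)) :
    ∃ C, ∀ s ∈ Set.Ioc (0 : ℝ) 1, |tailIntegral n E s q 1 - tailIntegral n E s 0 1| ≤ C := by
  set H : EuclideanSpace ℝ (Fin n) → ℝ := fun y => (ball 0 (2 * ‖q‖ + 2)).indicator (fun _ => 2) y
    + (n + 1) * 4 ^ ((n : ℝ) + 1) * ‖q‖ * (1 + ‖y‖) ^ (-((n : ℝ) + 1))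
  have hH : Integrable H :=
    ((integrableOn_const measure_ball_lt_top.ne).integrable_indicator measurableSet_ball).add
      ((integrable_one_add_norm (by simp)).const_mul _)
  refine ⟨∫ y, H y, fun s ⟨hs0, hs1⟩ => ?_⟩
  have hp : (n : ℝ) < n + s := by linarith
  have hq := integrable_tailIntegrand hE hp q
  have h0 := integrable_tailIntegrand hE hp 0
  rw [tailIntegral_eq_integral_tailIntegrand, tailIntegral_eq_integral_tailIntegrand,
    ← integral_sub hq h0]
  exact (abs_integral_le_integral_abs).trans
    (integral_mono (hq.sub h0).abs hH fun y => abs_tailIntegrand_sub_le hp (by linarith) q y)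

lemma tendsto_mul_tailIntegral_sub (hE : MeasurableSet E) (q : EuclideanSpace ℝ (Fin n)) :
    Tendsto (fun s => s * tailIntegral n E s q 1 - s * tailIntegral n E s 0 1)
      (𝓝[>] 0) (𝓝 0) := by
  obtain ⟨C, hC⟩ := exists_abs_tailIntegral_sub_le hE q
  have hsC : Tendsto (fun s : ℝ => s * C) (𝓝[>] 0) (𝓝 0) := by
    simpa using (tendsto_id.mul_const C).mono_left (nhdsWithin_le_nhds (a := (0 : ℝ)))
  refine squeeze_zero_norm' ?_ hsC
  filter_upwards [Ioc_mem_nhdsGT zero_lt_one] with s hs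
  rw [Real.norm_eq_abs, ← mul_sub, abs_mul, abs_of_pos hs.1]
  exact mul_le_mul_of_nonneg_left (hC s hs) hs.1.le

end TailIntegrand

theorem alphaBar_invariant_rigid_general (n : ℕ) (E : Set (EuclideanSpace ℝ (Fin n)))
    (hE : MeasurableSet E) (x : EuclideanSpace ℝ (Fin n))
    (R : EuclideanSpace ℝ (Fin n) ≃ₗᵢ[ℝ] EuclideanSpace ℝ (Fin n)) :
    alphaBar n ((fun y => y + x) '' E) = alphaBar n E ∧
      alphaBar n ((⇑R) '' E) = alphaBar n E := by
  have htranslate (s : ℝ) : tailIntegral n ((fun y => y + x) '' E) s 0 1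
      = tailIntegral n E s (-x) 1 := by
    simpa using tailIntegral_image_isometryEquiv E (IsometryEquiv.addRight x)
      (measurePreserving_add_right volume x) s (-x) 1
  have hrotate (s : ℝ) : tailIntegral n (R '' E) s 0 1 = tailIntegral n E s 0 1 := by
    simpa using tailIntegral_image_isometryEquiv E R.toIsometryEquiv R.measurePreserving s 0 1
  refine ⟨?_, by simp only [alphaBar, hrotate]⟩
  simp only [alphaBar, htranslate]
  exact limsup_eq_limsup_of_tendsto_sub (tendsto_mul_tailIntegral_sub hE (-x))

/-- Invariance of `ᾱ` with respect to rigid motions: for every translation vector `x`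
one has `ᾱ(E + x) = ᾱ(E)`, and for every rotation `R ∈ SO(n)` one has `ᾱ(R E) = ᾱ(E)`. -/
theorem alphaBar_invariant_rigid (n : ℕ) (E : Set (EuclideanSpace ℝ (Fin n)))
    (hE : MeasurableSet E) (x : EuclideanSpace ℝ (Fin n))
    (R : EuclideanSpace ℝ (Fin n) ≃ₗᵢ[ℝ] EuclideanSpace ℝ (Fin n))
    (hR : LinearMap.det (R.toLinearEquiv.toLinearMap) = 1) :
    alphaBar n ((fun y => y + x) '' E) = alphaBar n E ∧
      alphaBar n ((⇑R) '' E) = alphaBar n E :=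
  alphaBar_invariant_rigid_general n E hE x R
end

section
/- For any E, F ⊆ ℝⁿ, r > 0, q ∈ ℝⁿ and s ∈ (0,1), the weighted tails satisfy |∫_{ℝⁿ \ B_r(q)} χ_E(y)/|q−y|^{n+s} dy − ∫_{ℝⁿ \ B_r(q)} χ_F(y)/|q−y|^{n+s} dy| ≤ ∫_{ℝⁿ \ B_r(q)} χ_{E Δ F}(y)/|q−y|^{n+s} dy. Consequently, if |E Δ F| < ∞ and α(E) exists, then α(F) exists and equals α(E). -/
/-!
Pointwise `|χ_E - χ_F| = χ_{E Δ F}`, so the first inequality is the triangle inequality for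
integrals; everything is integrable because off `B_r(q)` the kernel `|q - y|^{-(n+s)}` is
dominated by a multiple of the integrable `(1 + |y - q|)^{-(n+s)}`. Off `B₁` the kernel is at
most `1`, so the tail of `E Δ F` is at most `|E Δ F|`, whence
`|α_s(F) - α_s(E)| ≤ s |E Δ F| → 0`.
-/

open MeasureTheory Filter Metric Topology
open scoped symmDiff

/-- `α_s(E) = s · ∫_{ℝⁿ \ B₁} χ_E(y)/|y|^{n+s} dy`. -/
noncomputable def alphaS (n : ℕ) (E : Set (EuclideanSpace ℝ (Fin n))) (s : ℝ) : ℝ :=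
  s * tailIntegral n E s 0 1

lemma inv_rpow_le_mul_one_add_rpow_neg {r p t : ℝ} (hr : 0 < r) (hp : 0 ≤ p) (ht : r ≤ t) :
    (t ^ p)⁻¹ ≤ (1 + r⁻¹) ^ p * (1 + t) ^ (-p) := by
  have ht0 : 0 < t := hr.trans_le ht
  have hle : 1 + t ≤ (1 + r⁻¹) * t := by
    have : 1 ≤ r⁻¹ * t := by rw [inv_mul_eq_div, one_le_div hr]; exact ht
    linarith
  rw [Real.rpow_neg (by positivity), ← div_eq_mul_inv, le_div_iff₀ (by positivity),
    inv_mul_eq_div, div_le_iff₀ (by positivity), ← Real.mul_rpow (by positivity) ht0.le]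
  exact Real.rpow_le_rpow (by positivity) hle hp

section Kernel

variable {V : Type*} [NormedAddCommGroup V] [NormedSpace ℝ V] [FiniteDimensional ℝ V]
  [MeasurableSpace V] [BorelSpace V] (μ : Measure V) [μ.IsAddHaarMeasure]

lemma integrableOn_compl_ball_inv_norm_sub_rpow {p r : ℝ} (hp : Module.finrank ℝ V < p)
    (hr : 0 < r) (q : V) : IntegrableOn (fun y => (‖q - y‖ ^ p)⁻¹) (ball q r)ᶜ μ := by
  have hbracket : Integrable (fun y => (1 + r⁻¹) ^ p * (1 + ‖y - q‖) ^ (-p)) μ :=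
    ((integrable_one_add_norm hp).comp_sub_right q).const_mul _
  refine hbracket.integrableOn.mono' (Measurable.aestronglyMeasurable (by fun_prop)) ?_
  filter_upwards [ae_restrict_mem measurableSet_ball.compl] with y hy
  have hry : r ≤ ‖y - q‖ := by simpa [dist_eq_norm] using hy
  rw [Real.norm_of_nonneg (by positivity), norm_sub_rev q y]
  exact inv_rpow_le_mul_one_add_rpow_neg hr ((Nat.cast_nonneg _).trans hp.le) hry

end Kernel

lemma indicator_one_div_eq_indicator_inv {α : Type*} (G : Set α) (k : α → ℝ) (y : α) :
    G.indicator (fun _ => (1 : ℝ)) y / k y = G.indicator (fun y => (k y)⁻¹) y := by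
  by_cases hy : y ∈ G <;> simp [hy]

section IndicatorDiv

variable {α : Type*} [MeasurableSpace α] {μ : Measure α} {k : α → ℝ}

lemma MeasureTheory.Integrable.indicator_one_div (hk : Integrable (fun y => (k y)⁻¹) μ)
    {G : Set α} (hG : MeasurableSet G) :
    Integrable (fun y => G.indicator (fun _ => (1 : ℝ)) y / k y) μ := by
  simp_rw [indicator_one_div_eq_indicator_inv]
  exact hk.indicator hG

lemma abs_integral_indicator_one_div_sub_le (hk : ∀ y, 0 ≤ k y) {E F : Set α}
    (hE : Integrable (fun y => E.indicator (fun _ => (1 : ℝ)) y / k y) μ)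
    (hF : Integrable (fun y => F.indicator (fun _ => (1 : ℝ)) y / k y) μ) :
    |∫ y, E.indicator (fun _ => (1 : ℝ)) y / k y ∂μ -
        ∫ y, F.indicator (fun _ => (1 : ℝ)) y / k y ∂μ| ≤
      ∫ y, (E ∆ F).indicator (fun _ => (1 : ℝ)) y / k y ∂μ := by
  rw [← integral_sub hE hF]
  refine abs_integral_le_integral_abs.trans_eq (integral_congr_ae (ae_of_all _ fun y => ?_))
  dsimp only
  rw [← sub_div, abs_div, abs_of_nonneg (hk y), ← Set.abs_indicator_symmDiff,
    abs_of_nonneg (Set.indicator_nonneg (fun _ _ => zero_le_one) y)]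

lemma integral_indicator_one_div_le_measureReal (hk : ∀ᵐ y ∂μ, 1 ≤ k y) {G : Set α}
    (hG : MeasurableSet G) (hG_fin : μ G ≠ ⊤) :
    ∫ y, G.indicator (fun _ => (1 : ℝ)) y / k y ∂μ ≤ μ.real G := by
  rw [← integral_indicator_one hG]
  refine integral_mono_of_nonneg ?_ ((integrable_indicator_iff hG).2 (integrableOn_const hG_fin)) ?_
  · filter_upwards [hk] with y hy
    exact div_nonneg (Set.indicator_nonneg (fun _ _ => zero_le_one) y) (zero_le_one.trans hy)
  · filter_upwards [hk] with y hy
    by_cases hyG : y ∈ G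
    · simpa [hyG] using inv_le_one_of_one_le₀ hy
    · simp [hyG]

end IndicatorDiv

section Tail

variable {n : ℕ} {s : ℝ}

lemma integrableOn_compl_ball_indicator_one_div_norm_sub_rpow (hs : 0 < s) {r : ℝ} (hr : 0 < r)
    (q : EuclideanSpace ℝ (Fin n)) {G : Set (EuclideanSpace ℝ (Fin n))} (hG : MeasurableSet G) :
    IntegrableOn (fun y => G.indicator (fun _ => (1 : ℝ)) y / ‖q - y‖ ^ ((n : ℝ) + s))
      (ball q r)ᶜ :=
  (integrableOn_compl_ball_inv_norm_sub_rpow volume (by simpa using hs) hr q).indicator_one_div hG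

theorem abs_tailIntegral_sub_le {E F : Set (EuclideanSpace ℝ (Fin n))} (hE : MeasurableSet E)
    (hF : MeasurableSet F) (hs : 0 < s) (q : EuclideanSpace ℝ (Fin n)) {r : ℝ} (hr : 0 < r) :
    |tailIntegral n E s q r - tailIntegral n F s q r| ≤ tailIntegral n (E ∆ F) s q r :=
  abs_integral_indicator_one_div_sub_le (fun _ => by positivity)
    (integrableOn_compl_ball_indicator_one_div_norm_sub_rpow hs hr q hE)
    (integrableOn_compl_ball_indicator_one_div_norm_sub_rpow hs hr q hF)

theorem tailIntegral_zero_one_le_volume {G : Set (EuclideanSpace ℝ (Fin n))}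
    (hG : MeasurableSet G) (hG_fin : volume G ≠ ⊤) (hs : 0 ≤ s) :
    tailIntegral n G s 0 1 ≤ volume.real G := by
  have hkernel : ∀ᵐ y ∂volume.restrict (ball (0 : EuclideanSpace ℝ (Fin n)) 1)ᶜ,
      1 ≤ ‖0 - y‖ ^ ((n : ℝ) + s) := by
    filter_upwards [ae_restrict_mem measurableSet_ball.compl] with y hy
    exact Real.one_le_rpow (by simpa using hy) (by positivity)
  calc tailIntegral n G s 0 1 ≤ (volume.restrict (ball 0 1)ᶜ).real G :=
        integral_indicator_one_div_le_measureReal hkernel hG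
          (ne_top_of_le_ne_top hG_fin (Measure.restrict_apply_le _ _))
    _ ≤ volume.real G := ENNReal.toReal_mono hG_fin (Measure.restrict_apply_le _ _)

theorem abs_alphaS_sub_le {E F : Set (EuclideanSpace ℝ (Fin n))} (hE : MeasurableSet E)
    (hF : MeasurableSet F) (hEF : volume (E ∆ F) ≠ ⊤) (hs : 0 < s) :
    |alphaS n F s - alphaS n E s| ≤ s * volume.real (E ∆ F) := by
  rw [alphaS, alphaS, ← mul_sub, abs_mul, abs_of_pos hs, abs_sub_comm]
  gcongr
  exact (abs_tailIntegral_sub_le hE hF hs 0 one_pos).trans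
    (tailIntegral_zero_one_le_volume (hE.symmDiff hF) hEF hs.le)

end Tail

/-- The weighted tails of `E` and `F` differ at most by the weighted tail of `E Δ F`;
consequently, if `|E Δ F| < ∞` and `α(E)` exists, then `α(F)` exists and `α(F) = α(E)`. -/
theorem tail_symmDiff (n : ℕ) (E F : Set (EuclideanSpace ℝ (Fin n)))
    (hE : MeasurableSet E) (hF : MeasurableSet F) :
    (∀ s ∈ Set.Ioo (0 : ℝ) 1, ∀ (q : EuclideanSpace ℝ (Fin n)) (r : ℝ), 0 < r →
      |tailIntegral n E s q r - tailIntegral n F s q r| ≤ tailIntegral n (E ∆ F) s q r) ∧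
      (volume (E ∆ F) < ⊤ → ∀ a : ℝ, Tendsto (alphaS n E) (𝓝[>] (0 : ℝ)) (𝓝 a) →
        Tendsto (alphaS n F) (𝓝[>] (0 : ℝ)) (𝓝 a)) := by
  refine ⟨fun s hs q r hr => abs_tailIntegral_sub_le hE hF hs.1 q hr, fun hEF a hEa => ?_⟩
  have hdiff : Tendsto (fun s => alphaS n F s - alphaS n E s) (𝓝[>] 0) (𝓝 0) := by
    have hlin : Tendsto (fun s : ℝ => s * volume.real (E ∆ F)) (𝓝[>] 0) (𝓝 0) := by
      simpa using ((continuous_mul_const (volume.real (E ∆ F))).tendsto (0 : ℝ)).mono_left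
        nhdsWithin_le_nhds
    refine squeeze_zero_norm' ?_ hlin
    filter_upwards [self_mem_nhdsWithin] with s hs
    exact abs_alphaS_sub_le hE hF hEF.ne hs
  simpa using hEa.add hdiff
end

section
/- For the supergraph E = { (x, y) ∈ ℝ² : y ≥ x³ } of the cubic in the plane, α(E) exists and equals π. -/
open MeasureTheory Filter Metric Topology

/-! The reflection `x ↦ -x` maps the supergraph `{x₁ ≥ x₀³}` onto the subgraph `{x₁ ≤ x₀³}`, and
the two meet only in the graph of the cubic, a null set. As the kernel `|y|^{-(2+s)}` is even, the
supergraph carries exactly half of `∫_{|y| ≥ 1} |y|^{-(2+s)} dy = 2π/s` (polar coordinates). Hence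
`α_s(E) = π` for every `s > 0`, not only in the limit. -/

open Set Module Real

theorem eqOn_pow_sub_one_smul_indicator_rpow_inv {d : ℕ} (hd : 1 ≤ d) (s : ℝ) :
    EqOn (fun y : ℝ => y ^ (d - 1) • (Ici 1).indicator (fun r : ℝ => (r ^ ((d : ℝ) + s))⁻¹) y)
      ((Ici 1).indicator fun r => r ^ (-s - 1)) (Ioi 0) := by
  intro y (hy : 0 < y)
  by_cases hy1 : y ∈ Ici 1
  · simp only [indicator_of_mem hy1, smul_eq_mul]
    rw [← Real.rpow_natCast, Nat.cast_sub hd, ← Real.rpow_neg hy.le, ← Real.rpow_add hy]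
    ring_nf
  · simp [indicator_of_notMem hy1]

theorem indicator_compl_ball_comp_norm {E : Type*} [SeminormedAddCommGroup E] (g : ℝ → ℝ) :
    (ball (0 : E) 1)ᶜ.indicator (fun x => g ‖x‖) = fun x => (Ici 1).indicator g ‖x‖ := by
  ext x
  by_cases hx : 1 ≤ ‖x‖ <;> simp [hx]

section Radial

variable {E : Type*} [NormedAddCommGroup E] [NormedSpace ℝ E] [FiniteDimensional ℝ E]
  [Nontrivial E] [MeasurableSpace E] [BorelSpace E] (μ : Measure E) [μ.IsAddHaarMeasure]

theorem integrableOn_compl_ball_norm_rpow_inv {s : ℝ} (hs : 0 < s) :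
    IntegrableOn (fun x : E => (‖x‖ ^ ((finrank ℝ E : ℝ) + s))⁻¹) (ball 0 1)ᶜ μ := by
  rw [← integrable_indicator_iff measurableSet_ball.compl,
    indicator_compl_ball_comp_norm (fun r => (r ^ ((finrank ℝ E : ℝ) + s))⁻¹),
    integrable_fun_norm_addHaar μ,
    integrableOn_congr_fun (eqOn_pow_sub_one_smul_indicator_rpow_inv finrank_pos s)
      measurableSet_Ioi]
  have h : IntegrableOn (fun r : ℝ => r ^ (-s - 1)) (Ici 1) := by
    rw [integrableOn_Ici_iff_integrableOn_Ioi]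
    exact integrableOn_Ioi_rpow_of_lt (by linarith) one_pos
  exact ((integrable_indicator_iff measurableSet_Ici).2 h).integrableOn

theorem integral_compl_ball_norm_rpow_inv {s : ℝ} (hs : 0 < s) :
    ∫ x in (ball 0 1)ᶜ, (‖x‖ ^ ((finrank ℝ E : ℝ) + s))⁻¹ ∂μ
      = finrank ℝ E * μ.real (ball 0 1) / s := by
  have hradial : ∫ r in Ioi (0 : ℝ), (Ici 1).indicator (fun r : ℝ => r ^ (-s - 1)) r = 1 / s := by
    rw [setIntegral_indicator measurableSet_Ici,
      inter_eq_right.2 (Ici_subset_Ioi.2 one_pos), integral_Ici_eq_integral_Ioi,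
      integral_Ioi_rpow_of_lt (by linarith) one_pos]
    simp
  rw [← integral_indicator measurableSet_ball.compl,
    indicator_compl_ball_comp_norm (fun r => (r ^ ((finrank ℝ E : ℝ) + s))⁻¹),
    integral_fun_norm_addHaar μ,
    setIntegral_congr_fun measurableSet_Ioi
      (eqOn_pow_sub_one_smul_indicator_rpow_inv finrank_pos s),
    hradial]
  simp only [nsmul_eq_mul, smul_eq_mul]
  ring

end Radial

theorem setIntegral_inter_eq_half_of_neg_ae_eq_compl {G : Type*} [MeasurableSpace G]
    [AddGroup G] [MeasurableNeg G] {μ : Measure G} [μ.IsNegInvariant] {f : G → ℝ}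
    {A E : Set G} (hA : -A = A) (hf : ∀ x, f (-x) = f x) (hE : MeasurableSet E)
    (hEc : -E =ᵐ[μ] Eᶜ) (hfA : IntegrableOn f A μ) :
    ∫ x in A ∩ E, f x ∂μ = (∫ x in A, f x ∂μ) / 2 := by
  have hreflect : ∫ x in A \ E, f x ∂μ = ∫ x in A ∩ E, f x ∂μ :=
    calc ∫ x in A \ E, f x ∂μ = ∫ x in -(A ∩ E), f x ∂μ := by
          rw [Set.inter_neg, hA]
          exact setIntegral_congr_set ((EventuallyEq.refl _ A).inter hEc.symm)
      _ = ∫ x in -(A ∩ E), f (-x) ∂μ := by simp only [hf]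
      _ = ∫ x in A ∩ E, f x ∂μ :=
          (Measure.measurePreserving_neg μ).setIntegral_preimage_emb measurableEmbedding_neg f _
  linarith [integral_inter_add_sdiff hE hfA]

theorem tailIntegral_zero_one_eq {n : ℕ} {E : Set (EuclideanSpace ℝ (Fin n))}
    (hE : MeasurableSet E) (s : ℝ) :
    tailIntegral n E s 0 1 = ∫ y in (ball 0 1)ᶜ ∩ E, (‖y‖ ^ ((n : ℝ) + s))⁻¹ := by
  rw [tailIntegral, ← setIntegral_indicator hE]
  congr 1 with y
  by_cases hy : y ∈ E <;> simp [hy]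

/-- `n * |B₁|` is the area `ω_n` of the unit sphere, so this is `α(E) = ω_n / 2`. -/
theorem alphaS_eq_of_neg_ae_eq_compl {n : ℕ} [NeZero n] {E : Set (EuclideanSpace ℝ (Fin n))}
    (hE : MeasurableSet E) (hEc : -E =ᵐ[volume] Eᶜ) {s : ℝ} (hs : 0 < s) :
    alphaS n E s = n * volume.real (ball (0 : EuclideanSpace ℝ (Fin n)) 1) / 2 := by
  have hint := integrableOn_compl_ball_norm_rpow_inv (E := EuclideanSpace ℝ (Fin n)) volume hs
  have hval := integral_compl_ball_norm_rpow_inv (E := EuclideanSpace ℝ (Fin n)) volume hs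
  rw [finrank_euclideanSpace_fin] at hint hval
  rw [alphaS, tailIntegral_zero_one_eq hE, setIntegral_inter_eq_half_of_neg_ae_eq_compl
    (by simp) (by simp) hE hEc hint, hval]
  field_simp

theorem prod_volume_graph_eq_zero {α : Type*} [MeasurableSpace α] (μ : Measure α) [SFinite μ]
    {f : α → ℝ} (hf : Measurable f) : μ.prod volume {p : α × ℝ | p.2 = f p.1} = 0 := by
  rw [Measure.prod_apply (measurableSet_graph hf)]
  simp [preimage]

theorem ae_ne_graph {f : ℝ → ℝ} (hf : Measurable f) :
    ∀ᵐ x : EuclideanSpace ℝ (Fin 2), x 1 ≠ f (x 0) := by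
  have hmp := (volume_preserving_finTwoArrow ℝ).comp (PiLp.volume_preserving_ofLp (Fin 2))
  simp only [ae_iff, ne_eq, not_not]
  exact (hmp.measure_preimage (measurableSet_graph hf).nullMeasurableSet).trans
    (prod_volume_graph_eq_zero volume hf)

theorem neg_supergraph_ae_eq_compl {f : ℝ → ℝ} (hf : Measurable f) (hodd : ∀ t, f (-t) = -f t) :
    -{x : EuclideanSpace ℝ (Fin 2) | f (x 0) ≤ x 1} =ᵐ[volume] {x | f (x 0) ≤ x 1}ᶜ := by
  filter_upwards [ae_ne_graph hf] with x hx
  apply propext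
  show f ((-x) 0) ≤ (-x) 1 ↔ ¬f (x 0) ≤ x 1
  simp only [PiLp.neg_apply, hodd, neg_le_neg_iff, not_le]
  exact ⟨fun h => lt_of_le_of_ne h hx, le_of_lt⟩

/-- For the supergraph `E = {(x, y) ∈ ℝ² : y ≥ x³}` of the cubic in the plane,
`α(E)` exists and equals `π`. -/
theorem alpha_supergraph_cubic :
    Tendsto (alphaS 2 {x : EuclideanSpace ℝ (Fin 2) | (x 0) ^ 3 ≤ x 1})
      (𝓝[>] (0 : ℝ)) (𝓝 Real.pi) := by
  set E := {x : EuclideanSpace ℝ (Fin 2) | (x 0) ^ 3 ≤ x 1}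
  have hE : MeasurableSet E := measurableSet_le (by fun_prop) (by fun_prop)
  have hEc : -E =ᵐ[volume] Eᶜ :=
    neg_supergraph_ae_eq_compl (measurable_id.pow_const 3) fun t => Odd.neg_pow (by decide) t
  have hα : ∀ s > 0, alphaS 2 E s = π := fun s hs => by
    rw [alphaS_eq_of_neg_ae_eq_compl hE hEc hs, measureReal_def,
      EuclideanSpace.volume_ball_fin_two]
    simp [pi_nonneg]
  exact tendsto_const_nhds.congr' (eventually_nhdsWithin_of_forall fun s hs => (hα s hs).symm)
end

section
/- Let Ω ⊆ ℝⁿ be a bounded open set with C² boundary, and let r₀ > 0 be such that Ω satisfies a strict interior and exterior ball condition of radius 2r₀ at every boundary point. Then for every δ ∈ [−r₀, r₀], the sublevel set Ω_δ := { x : d̄_Ω(x) < δ } satisfies a uniform interior and exterior ball condition of radius at least r₀. -/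
open MeasureTheory Filter Metric Topology

/-- The signed distance from `∂Ω`, negative inside `Ω`:
`d̄_Ω(x) = d(x, Ω) − d(x, ℝⁿ \ Ω)`. -/
noncomputable def sgnDist (n : ℕ) (Ω : Set (EuclideanSpace ℝ (Fin n)))
    (x : EuclideanSpace ℝ (Fin n)) : ℝ :=
  Metric.infDist x Ω - Metric.infDist x Ωᶜ

/-!
At a boundary point `p` of `Ω` the interior and exterior tangent balls of radius `R = 2r₀` are
disjoint, so their centres `a`, `b` are antipodal: `p` is the midpoint of `ab`. Each ball gives
a barrier for the signed distance: `d̄_Ω ≤ dist(·, a) - R` and `R - dist(·, b) ≤ d̄_Ω`.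
If `d̄_Ω(x) = δ ≥ 0` and `p` is a boundary point nearest to `x`, the first barrier and the
triangle inequality give `dist(x, a) = R + δ`, and Apollonius's theorem in the triangle `xab`
then gives `dist(x, b) = R - δ`; the case `δ ≤ 0` is symmetric. Hence the level set `{d̄_Ω = δ}` is touched at `x`
by the balls `B(a, R + δ) ⊆ {d̄_Ω < δ}` and `B(b, R - δ) ⊆ {d̄_Ω > δ}`, both of radius at least
`r₀` when `|δ| ≤ r₀`, and inside each of them sits a ball of radius exactly `r₀` touching `x`.
-/

section NormedSpace

variable {E : Type*} [NormedAddCommGroup E] [NormedSpace ℝ E]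

theorem infDist_le_dist_sub_of_ball_subset {S : Set E} {c z : E} {R : ℝ} (hR : 0 < R)
    (hS : ball c R ⊆ S) (hz : R ≤ dist z c) : infDist z S ≤ dist z c - R := by
  refine le_of_forall_pos_lt_add fun ε hε => ?_
  obtain ⟨w, hzw, hwc⟩ :=
    exists_dist_lt_lt (x := z) (z := c) (by linarith : 0 < dist z c - R + ε) hR (by linarith)
  exact (infDist_le_dist_of_mem (hS hwc)).trans_lt hzw

omit [NormedSpace ℝ E] in
theorem sub_dist_le_infDist_compl_of_ball_subset {S : Set E} {c z : E} {R : ℝ}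
    (hS : ball c R ⊆ S) (hSc : Sᶜ.Nonempty) : R - dist z c ≤ infDist z Sᶜ :=
  (le_infDist hSc).2 fun w hw => by
    have hwc : R ≤ dist w c := not_lt.1 fun h => hw (hS h)
    linarith [dist_triangle w z c, dist_comm z w]

theorem infDist_sub_infDist_compl_le_of_ball_subset {S : Set E} {c : E} {R : ℝ} (hR : 0 < R)
    (hS : ball c R ⊆ S) (hSc : Sᶜ.Nonempty) (z : E) :
    infDist z S - infDist z Sᶜ ≤ dist z c - R := by
  rcases lt_or_ge (dist z c) R with hz | hz
  · rw [infDist_zero_of_mem (hS hz)]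
    linarith [sub_dist_le_infDist_compl_of_ball_subset (z := z) hS hSc]
  · linarith [infDist_le_dist_sub_of_ball_subset hR hS hz, infDist_nonneg (x := z) (s := Sᶜ)]

theorem exists_mem_frontier_dist_eq_abs_infDist_sub [FiniteDimensional ℝ E] {S : Set E}
    (hS : S.Nonempty) (hSc : Sᶜ.Nonempty) (x : E) :
    ∃ p ∈ frontier S, dist x p = |infDist x S - infDist x Sᶜ| := by
  by_cases hx : x ∈ S
  · obtain ⟨p, hp, hd⟩ := exists_mem_frontier_infDist_compl_eq_dist hx (Set.nonempty_compl.1 hSc)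
    refine ⟨p, hp, ?_⟩
    rw [infDist_zero_of_mem hx, zero_sub, abs_neg, abs_of_nonneg infDist_nonneg, hd]
  · obtain ⟨p, hp, hd⟩ :=
      exists_mem_frontier_infDist_compl_eq_dist (s := Sᶜ) hx (by simpa using hS.ne_empty)
    refine ⟨p, frontier_compl S ▸ hp, ?_⟩
    rw [compl_compl] at hd
    rw [infDist_zero_of_mem (Set.mem_compl hx), sub_zero, abs_of_nonneg infDist_nonneg, hd]

theorem exists_ball_subset_ball_of_dist_eq {a x : E} {r ρ : ℝ} (hr : 0 < r) (hrρ : r ≤ ρ)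
    (hx : dist x a = ρ) : ∃ c, ball c r ⊆ ball a ρ ∧ x ∈ sphere c r := by
  have hρ : 0 < ρ := hr.trans_le hrρ
  refine ⟨AffineMap.lineMap x a (r / ρ), ball_subset_ball' ?_, ?_⟩
  · have hrρ' : 0 ≤ 1 - r / ρ := by rwa [sub_nonneg, div_le_one hρ]
    rw [dist_lineMap_right, hx, Real.norm_of_nonneg hrρ', sub_mul, one_mul,
      div_mul_cancel₀ _ hρ.ne']
    linarith
  · rw [mem_sphere, dist_left_lineMap, hx, Real.norm_of_nonneg (by positivity),
      div_mul_cancel₀ _ hρ.ne']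

theorem eq_midpoint_of_disjoint_ball [StrictConvexSpace ℝ E] {a b p : E} {R : ℝ} (hR : 0 < R)
    (hab : Disjoint (ball a R) (ball b R)) (ha : dist p a = R) (hb : dist p b = R) :
    p = midpoint ℝ a b ∧ dist a b = 2 * R := by
  have hab' : dist a b = 2 * R :=
    le_antisymm (by linarith [dist_triangle a p b, dist_comm a p])
      (by linarith [(disjoint_ball_ball_iff hR hR).1 hab])
  refine ⟨eq_midpoint_of_dist_eq_half ?_ ?_, hab'⟩ <;> linarith [dist_comm a p]

end NormedSpace

theorem dist_eq_abs_sub_of_dist_eq_add_dist_midpoint {V : Type*} [NormedAddCommGroup V]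
    [InnerProductSpace ℝ V] {a b x : V} {R : ℝ} (hab : dist a b = 2 * R)
    (hxa : dist x a = R + dist x (midpoint ℝ a b)) :
    dist x b = |R - dist x (midpoint ℝ a b)| := by
  have h := EuclideanGeometry.dist_sq_add_dist_sq_eq_two_mul_dist_midpoint_sq_add_half_dist_sq x a b
  rw [hab, hxa] at h
  rw [← abs_of_nonneg (dist_nonneg (x := x) (y := b)), ← sq_eq_sq_iff_abs_eq_abs]
  linarith

section SignedDistance

variable {n : ℕ} {Ω : Set (EuclideanSpace ℝ (Fin n))}

theorem continuous_sgnDist : Continuous (sgnDist n Ω) :=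
  (continuous_infDist_pt Ω).sub (continuous_infDist_pt Ωᶜ)

theorem sgnDist_compl (z : EuclideanSpace ℝ (Fin n)) : sgnDist n Ωᶜ z = -sgnDist n Ω z := by
  simp only [sgnDist, compl_compl, neg_sub]

theorem nonempty_of_frontier_setOf_sgnDist_lt_nonempty {δ : ℝ}
    (h : (frontier {z | sgnDist n Ω z < δ}).Nonempty) : Ω.Nonempty ∧ Ωᶜ.Nonempty := by
  by_contra hΩ
  -- `infDist · ∅ = 0`, so `sgnDist` vanishes identically when `Ω = ∅` or `Ω = univ`
  have hzero : ∀ z, sgnDist n Ω z = 0 := by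
    intro z
    rcases not_and_or.1 hΩ with hΩ | hΩ <;>
      simp only [Set.not_nonempty_iff_eq_empty, Set.compl_empty_iff] at hΩ <;>
      simp [sgnDist, hΩ, infDist_zero_of_mem (Set.mem_univ z)]
  by_cases hδ : 0 < δ <;> simp [hzero, hδ] at h

theorem sgnDist_le_dist_sub_of_ball_subset {a : EuclideanSpace ℝ (Fin n)} {R : ℝ} (hR : 0 < R)
    (ha : ball a R ⊆ Ω) (hΩc : Ωᶜ.Nonempty) (z : EuclideanSpace ℝ (Fin n)) :
    sgnDist n Ω z ≤ dist z a - R :=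
  infDist_sub_infDist_compl_le_of_ball_subset hR ha hΩc z

theorem sub_dist_le_sgnDist_of_ball_subset_compl {b : EuclideanSpace ℝ (Fin n)} {R : ℝ}
    (hR : 0 < R) (hb : ball b R ⊆ Ωᶜ) (hΩ : Ω.Nonempty) (z : EuclideanSpace ℝ (Fin n)) :
    R - dist z b ≤ sgnDist n Ω z := by
  have h := sgnDist_le_dist_sub_of_ball_subset hR hb (by rwa [compl_compl]) z
  rw [sgnDist_compl] at h
  linarith

theorem exists_barriers_sgnDist {R : ℝ} (hR : 0 < R)
    (hint : ∀ p ∈ frontier Ω, ∃ a, ball a R ⊆ Ω ∧ p ∈ sphere a R)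
    (hext : ∀ p ∈ frontier Ω, ∃ b, ball b R ⊆ (closure Ω)ᶜ ∧ p ∈ sphere b R)
    (hΩ : Ω.Nonempty) (hΩc : Ωᶜ.Nonempty) {x : EuclideanSpace ℝ (Fin n)}
    (hx : |sgnDist n Ω x| ≤ R) :
    ∃ a b, (∀ z, sgnDist n Ω z ≤ dist z a - R) ∧ (∀ z, R - dist z b ≤ sgnDist n Ω z) ∧
      dist x a = R + sgnDist n Ω x ∧ dist x b = R - sgnDist n Ω x := by
  obtain ⟨p, hp, hxp⟩ : ∃ p ∈ frontier Ω, dist x p = |sgnDist n Ω x| :=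
    exists_mem_frontier_dist_eq_abs_infDist_sub hΩ hΩc x
  obtain ⟨a, haΩ, hpa⟩ := hint p hp
  obtain ⟨b, hbΩ, hpb⟩ := hext p hp
  rw [mem_sphere] at hpa hpb
  have hbΩc : ball b R ⊆ Ωᶜ := hbΩ.trans (Set.compl_subset_compl.2 subset_closure)
  obtain ⟨rfl, hab⟩ := eq_midpoint_of_disjoint_ball hR
    (Disjoint.mono haΩ hbΩc disjoint_compl_right) hpa hpb
  have upper := sgnDist_le_dist_sub_of_ball_subset hR haΩ hΩc
  have lower := sub_dist_le_sgnDist_of_ball_subset_compl hR hbΩc hΩ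
  refine ⟨a, b, upper, lower, ?_⟩
  rcases le_total 0 (sgnDist n Ω x) with hδ | hδ
  · rw [abs_of_nonneg hδ] at hxp
    have hxa : dist x a = R + sgnDist n Ω x :=
      le_antisymm (by linarith [dist_triangle x (midpoint ℝ a b) a]) (by linarith [upper x])
    refine ⟨hxa, ?_⟩
    rw [dist_eq_abs_sub_of_dist_eq_add_dist_midpoint hab (by rw [hxa, hxp]), hxp,
      abs_of_nonneg (by rw [abs_of_nonneg hδ] at hx; linarith)]
  · rw [abs_of_nonpos hδ] at hxp
    have hxb : dist x b = R - sgnDist n Ω x :=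
      le_antisymm (by linarith [dist_triangle x (midpoint ℝ a b) b]) (by linarith [lower x])
    refine ⟨?_, hxb⟩
    rw [midpoint_comm] at hxp
    rw [dist_eq_abs_sub_of_dist_eq_add_dist_midpoint (by rw [dist_comm, hab])
      (by rw [hxb, hxp]; ring), hxp, abs_of_nonneg (by rw [abs_of_nonpos hδ] at hx; linarith)]
    ring

end SignedDistance

theorem uniform_ball_condition_sublevel_general (n : ℕ) (Ω : Set (EuclideanSpace ℝ (Fin n)))
    (r₀ : ℝ) (hr₀ : 0 < r₀)
    (hint : ∀ x ∈ frontier Ω, ∃ y, ball y (2 * r₀) ⊆ Ω ∧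
      sphere y (2 * r₀) ∩ frontier Ω = {x})
    (hext : ∀ x ∈ frontier Ω, ∃ y, ball y (2 * r₀) ⊆ (closure Ω)ᶜ ∧
      sphere y (2 * r₀) ∩ frontier Ω = {x}) :
    ∀ δ ∈ Set.Icc (-r₀) r₀,
      (∀ x ∈ frontier {z | sgnDist n Ω z < δ},
        ∃ y, ball y r₀ ⊆ {z | sgnDist n Ω z < δ} ∧ x ∈ sphere y r₀) ∧
      (∀ x ∈ frontier {z | sgnDist n Ω z < δ},
        ∃ y, ball y r₀ ⊆ (closure {z | sgnDist n Ω z < δ})ᶜ ∧ x ∈ sphere y r₀) := by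
  rintro δ ⟨hδl, hδu⟩
  have tangent {y x : EuclideanSpace ℝ (Fin n)} (h : sphere y (2 * r₀) ∩ frontier Ω = {x}) :
      x ∈ sphere y (2 * r₀) := (Set.eq_singleton_iff_unique_mem.1 h).1.1
  have barriers : ∀ x ∈ frontier {z | sgnDist n Ω z < δ}, ∃ a b,
      (∀ z, sgnDist n Ω z ≤ dist z a - 2 * r₀) ∧ (∀ z, 2 * r₀ - dist z b ≤ sgnDist n Ω z) ∧
      dist x a = 2 * r₀ + δ ∧ dist x b = 2 * r₀ - δ := by
    intro x hx
    have hxδ : sgnDist n Ω x = δ := frontier_lt_subset_eq continuous_sgnDist continuous_const hx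
    obtain ⟨hΩ, hΩc⟩ := nonempty_of_frontier_setOf_sgnDist_lt_nonempty ⟨x, hx⟩
    rw [← hxδ]
    exact exists_barriers_sgnDist (by positivity)
      (fun p hp => (hint p hp).imp fun _ h => ⟨h.1, tangent h.2⟩)
      (fun p hp => (hext p hp).imp fun _ h => ⟨h.1, tangent h.2⟩) hΩ hΩc
      (by rw [hxδ, abs_le]; constructor <;> linarith)
  refine ⟨fun x hx => ?_, fun x hx => ?_⟩
  · obtain ⟨a, -, upper, -, hxa, -⟩ := barriers x hx
    obtain ⟨c, hc, hxc⟩ := exists_ball_subset_ball_of_dist_eq hr₀ (by linarith) hxa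
    refine ⟨c, hc.trans fun z hz => ?_, hxc⟩
    show sgnDist n Ω z < δ
    linarith [upper z, mem_ball.1 hz]
  · obtain ⟨-, b, -, lower, -, hxb⟩ := barriers x hx
    obtain ⟨c, hc, hxc⟩ := exists_ball_subset_ball_of_dist_eq hr₀ (by linarith) hxb
    refine ⟨c, hc.trans fun z hz hzc => ?_, hxc⟩
    have hzδ : sgnDist n Ω z ≤ δ := closure_lt_subset_le continuous_sgnDist continuous_const hzc
    linarith [mem_ball.1 hz, lower z]

/-- Let `Ω ⊆ ℝⁿ` be a bounded open set with `C²` boundary (encoded by the signed distance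
being `C²` on the tubular neighborhood `{|d̄_Ω| < 2r₀}`) satisfying a strict interior and
exterior ball condition of radius `2r₀` at every boundary point. Then for every
`δ ∈ [−r₀, r₀]`, the set `Ω_δ = {d̄_Ω < δ}` satisfies a uniform interior and exterior ball
condition of radius at least `r₀`. -/
theorem uniform_ball_condition_sublevel (n : ℕ) (Ω : Set (EuclideanSpace ℝ (Fin n)))
    (hΩo : IsOpen Ω) (hΩb : Bornology.IsBounded Ω) (r₀ : ℝ) (hr₀ : 0 < r₀)
    (hC2 : ContDiffOn ℝ 2 (sgnDist n Ω) {x | |sgnDist n Ω x| < 2 * r₀})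
    (hint : ∀ x ∈ frontier Ω, ∃ y, ball y (2 * r₀) ⊆ Ω ∧
      sphere y (2 * r₀) ∩ frontier Ω = {x})
    (hext : ∀ x ∈ frontier Ω, ∃ y, ball y (2 * r₀) ⊆ (closure Ω)ᶜ ∧
      sphere y (2 * r₀) ∩ frontier Ω = {x}) :
    ∀ δ ∈ Set.Icc (-r₀) r₀,
      (∀ x ∈ frontier {z | sgnDist n Ω z < δ},
        ∃ y, ball y r₀ ⊆ {z | sgnDist n Ω z < δ} ∧ x ∈ sphere y r₀) ∧
      (∀ x ∈ frontier {z | sgnDist n Ω z < δ},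
        ∃ y, ball y r₀ ⊆ (closure {z | sgnDist n Ω z < δ})ᶜ ∧ x ∈ sphere y r₀) :=
  uniform_ball_condition_sublevel_general n Ω r₀ hr₀ hint hext
end
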